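/- Let V be a Gödel set in which 0 is not isolated (V ∩ (0,ε) ≠ ∅ for every ε > 0), and let L contain a unary predicate A. Then the sentence F := ¬∀x A(x) ∧ ∀x ¬¬A(x) admits no >0-valid equivalent prenex form: there is no prenex L-sentence P such that ¬¬(F ↔ P) is valid in G_V. -/

import Mathlib

namespace GodelPaper

/-- A first-order language: function and relation symbols of each arity. -/
structure Lang where
  Func : ℕ → Type
  Rel : ℕ → Type

/-- A Gödel set: a closed subset of [0,1] containing 0 and 1. -/
def GodelSet (V : Set ℝ) : Prop :=
  IsClosed V ∧ V ⊆ Set.Icc 0 1 ∧ (0:ℝ) ∈ V ∧ (1:ℝ) ∈ V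

/-- Terms with variables from `α`. -/
inductive Term (L : Lang) (α : Type) : Type
  | var : α → Term L α
  | func : ∀ {k}, L.Func k → (Fin k → Term L α) → Term L α

/-- A `V`-interpretation: nonempty domain, interpretation of function symbols,
and truth values in `V` for atomic sentences with parameters. -/
structure Interp (L : Lang) (V : Set ℝ) where
  Dom : Type
  dom_nonempty : Nonempty Dom
  funMap : ∀ {k}, L.Func k → (Fin k → Dom) → Dom
  relVal : ∀ {k}, L.Rel k → (Fin k → Dom) → ℝ
  relVal_mem : ∀ {k} (R : L.Rel k) (v : Fin k → Dom), relVal R v ∈ V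

def Term.eval {L : Lang} {V : Set ℝ} (I : Interp L V) {α : Type} (v : α → I.Dom) :
    Term L α → I.Dom
  | .var i => v i
  | .func f ts => I.funMap f fun j => Term.eval I v (ts j)

/-- Formulas of the Δ-extended language, with free variables among `Fin n`.
The quantifiers bind the *last* variable. Δ-free formulas (i.e. formulas of the
plain language) are singled out by the predicate `DeltaFree` below. -/
inductive Form (L : Lang) : ℕ → Type
  | falsum : ∀ {n}, Form L n
  | atom : ∀ {n k}, L.Rel k → (Fin k → Term L (Fin n)) → Form L n
  | conj : ∀ {n}, Form L n → Form L n → Form L n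
  | disj : ∀ {n}, Form L n → Form L n → Form L n
  | impl : ∀ {n}, Form L n → Form L n → Form L n
  | delta : ∀ {n}, Form L n → Form L n
  | all : ∀ {n}, Form L (n+1) → Form L n
  | ex : ∀ {n}, Form L (n+1) → Form L n

/-- The Gödel truth value of a formula under an interpretation and an
assignment of the free variables. -/
noncomputable def Form.val {L : Lang} {V : Set ℝ} (I : Interp L V) :
    ∀ {n}, Form L n → (Fin n → I.Dom) → ℝ
  | _, .falsum, _ => 0
  | _, .atom R ts, ρ => I.relVal R fun j => Term.eval I ρ (ts j)
  | _, .conj A B, ρ => min (Form.val I A ρ) (Form.val I B ρ)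
  | _, .disj A B, ρ => max (Form.val I A ρ) (Form.val I B ρ)
  | _, .impl A B, ρ => if Form.val I A ρ ≤ Form.val I B ρ then 1 else Form.val I B ρ
  | _, .delta A, ρ => if Form.val I A ρ = 1 then 1 else 0
  | _, .all A, ρ => sInf {v : ℝ | ∃ d : I.Dom, v = Form.val I A (Fin.snoc ρ d)}
  | _, .ex A, ρ => sSup {v : ℝ | ∃ d : I.Dom, v = Form.val I A (Fin.snoc ρ d)}

/-- The value of a sentence. -/
noncomputable def Form.sval {L : Lang} {V : Set ℝ} (I : Interp L V) (A : Form L 0) : ℝ :=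
  Form.val I A Fin.elim0

/-- `A` is valid in `G_V`. -/
def Valid {L : Lang} (V : Set ℝ) (A : Form L 0) : Prop :=
  ∀ I : Interp L V, Form.sval I A = 1

/-- `A` is 1-satisfiable in `G_V`. -/
def OneSat {L : Lang} (V : Set ℝ) (A : Form L 0) : Prop :=
  ∃ I : Interp L V, Form.sval I A = 1

/-- `A` is classically satisfiable: it takes value 1 under a `V`-interpretation
assigning only values in {0,1} to atomic sentences. -/
def ClassSat {L : Lang} (V : Set ℝ) (A : Form L 0) : Prop :=
  ∃ I : Interp L V,
    (∀ {k : ℕ} (R : L.Rel k) (v : Fin k → I.Dom), I.relVal R v = 0 ∨ I.relVal R v = 1) ∧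
    Form.sval I A = 1

/-- ¬A abbreviates A ⊃ ⊥. -/
def Form.not {L : Lang} {n : ℕ} (A : Form L n) : Form L n := Form.impl A Form.falsum

/-- A ↔ B abbreviates (A ⊃ B) ∧ (B ⊃ A). -/
def Form.iff {L : Lang} {n : ℕ} (A B : Form L n) : Form L n :=
  Form.conj (Form.impl A B) (Form.impl B A)

/-- Formulas of the plain language (no Δ). -/
def DeltaFree {L : Lang} : ∀ {n}, Form L n → Prop
  | _, .falsum => True
  | _, .atom _ _ => True
  | _, .conj A B => DeltaFree A ∧ DeltaFree B
  | _, .disj A B => DeltaFree A ∧ DeltaFree B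
  | _, .impl A B => DeltaFree A ∧ DeltaFree B
  | _, .delta _ => False
  | _, .all A => DeltaFree A
  | _, .ex A => DeltaFree A

/-- Quantifier-free formulas. -/
def QuantFree {L : Lang} : ∀ {n}, Form L n → Prop
  | _, .falsum => True
  | _, .atom _ _ => True
  | _, .conj A B => QuantFree A ∧ QuantFree B
  | _, .disj A B => QuantFree A ∧ QuantFree B
  | _, .impl A B => QuantFree A ∧ QuantFree B
  | _, .delta A => QuantFree A
  | _, .all _ => False
  | _, .ex _ => False

/-- Formulas containing no universal quantifier. -/
def AllFree {L : Lang} : ∀ {n}, Form L n → Prop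
  | _, .falsum => True
  | _, .atom _ _ => True
  | _, .conj A B => AllFree A ∧ AllFree B
  | _, .disj A B => AllFree A ∧ AllFree B
  | _, .impl A B => AllFree A ∧ AllFree B
  | _, .delta A => AllFree A
  | _, .all _ => False
  | _, .ex A => AllFree A

/-- Prenex formulas: a block of quantifiers followed by a quantifier-free matrix. -/
inductive IsPrenex {L : Lang} : ∀ {n}, Form L n → Prop
  | qf {n} {A : Form L n} : QuantFree A → IsPrenex A
  | all {n} {A : Form L (n+1)} : IsPrenex A → IsPrenex (Form.all A)
  | ex {n} {A : Form L (n+1)} : IsPrenex A → IsPrenex (Form.ex A)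

/-- Purely existential prenex formulas. -/
inductive ExPrenex {L : Lang} : ∀ {n}, Form L n → Prop
  | qf {n} {A : Form L n} : QuantFree A → ExPrenex A
  | ex {n} {A : Form L (n+1)} : ExPrenex A → ExPrenex (Form.ex A)

/-- The glued interpretation `I_ω`: atoms with value ≤ ω keep their value,
all other atoms get value 1. Same domain and function interpretations. -/
noncomputable def Interp.glue {L : Lang} {V : Set ℝ} (I : Interp L V) (ω : ℝ)
    (h1 : (1:ℝ) ∈ V) : Interp L V where
  Dom := I.Dom
  dom_nonempty := I.dom_nonempty
  funMap := fun {k} f v => I.funMap f v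
  relVal := fun {k} R v => if I.relVal R v ≤ ω then I.relVal R v else 1
  relVal_mem := fun {k} R v => by
    by_cases h : I.relVal R v ≤ ω
    · simpa [h] using I.relVal_mem R v
    · simpa [h] using h1

/-- The Gödel set `V_↑ = {1 - 1/k : k ≥ 1} ∪ {1}`. -/
def Vup : Set ℝ := {x : ℝ | ∃ k : ℕ, 1 ≤ k ∧ x = 1 - 1/(k:ℝ)} ∪ {1}

/-- The `m`-element Gödel set `V_m = {1 - 1/k : 1 ≤ k ≤ m-1} ∪ {1}`. -/
def Vfin (m : ℕ) : Set ℝ :=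
  {x : ℝ | ∃ k : ℕ, 1 ≤ k ∧ k ≤ m - 1 ∧ x = 1 - 1/(k:ℝ)} ∪ {1}

/-- Atomic formula built from a unary predicate. -/
def atom1 {L : Lang} (P : L.Rel 1) {n : ℕ} (t : Term L (Fin n)) : Form L n :=
  Form.atom P fun _ => t

/-- Atomic formula built from a 0-ary predicate (propositional atom). -/
def atom0 {L : Lang} (X : L.Rel 0) {n : ℕ} : Form L n :=
  Form.atom X fun i => i.elim0

def Term.rename {L : Lang} {α β : Type} (f : α → β) : Term L α → Term L β
  | .var i => .var (f i)
  | .func g ts => .func g fun j => Term.rename f (ts j)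

def Form.rename {L : Lang} : ∀ {m n}, (Fin m → Fin n) → Form L m → Form L n
  | _, _, _, .falsum => .falsum
  | _, _, f, .atom R ts => .atom R fun j => (ts j).rename f
  | _, _, f, .conj A B => .conj (A.rename f) (B.rename f)
  | _, _, f, .disj A B => .disj (A.rename f) (B.rename f)
  | _, _, f, .impl A B => .impl (A.rename f) (B.rename f)
  | _, _, f, .delta A => .delta (A.rename f)
  | _, _, f, .all A =>
      .all (A.rename (Fin.lastCases (Fin.last _) fun i => Fin.castSucc (f i)))
  | _, _, f, .ex A =>
      .ex (A.rename (Fin.lastCases (Fin.last _) fun i => Fin.castSucc (f i)))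

/-- Weakening: regard a formula with `n` free variables as one with `n+1`
free variables (not using the new last variable). -/
def Form.lift {L : Lang} {n : ℕ} (A : Form L n) : Form L (n+1) :=
  A.rename Fin.castSucc

def Term.subst {L : Lang} {α β : Type} (σ : α → Term L β) : Term L α → Term L β
  | .var i => σ i
  | .func g ts => .func g fun j => Term.subst σ (ts j)

def Form.subst {L : Lang} : ∀ {m n}, (Fin m → Term L (Fin n)) → Form L m → Form L n
  | _, _, _, .falsum => .falsum
  | _, _, σ, .atom R ts => .atom R fun j => (ts j).subst σ
  | _, _, σ, .conj A B => .conj (A.subst σ) (B.subst σ)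
  | _, _, σ, .disj A B => .disj (A.subst σ) (B.subst σ)
  | _, _, σ, .impl A B => .impl (A.subst σ) (B.subst σ)
  | _, _, σ, .delta A => .delta (A.subst σ)
  | _, _, σ, .all A =>
      .all (A.subst (Fin.lastCases (.var (Fin.last _))
        fun i => (σ i).rename Fin.castSucc))
  | _, _, σ, .ex A =>
      .ex (A.subst (Fin.lastCases (.var (Fin.last _))
        fun i => (σ i).rename Fin.castSucc))

/-- The language `L ∪ {f}` with one new function symbol of arity `a`. -/
def Lang.addFunc (L : Lang) (a : ℕ) : Lang where
  Func := fun k => L.Func k ⊕ PLift (k = a)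
  Rel := L.Rel

/-- The new function symbol of `L.addFunc a`. -/
def newFunc (L : Lang) (a : ℕ) : (L.addFunc a).Func a := Sum.inr ⟨rfl⟩

def Term.emb {L : Lang} {a : ℕ} {α : Type} : Term L α → Term (L.addFunc a) α
  | .var i => .var i
  | .func g ts => .func (Sum.inl g) fun j => Term.emb (ts j)

/-- Embedding of `L`-formulas into the language with the extra function symbol. -/
def Form.emb {L : Lang} {a : ℕ} : ∀ {n}, Form L n → Form (L.addFunc a) n
  | _, .falsum => .falsum
  | _, .atom R ts => .atom R fun j => (ts j).emb
  | _, .conj A B => .conj A.emb B.emb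
  | _, .disj A B => .disj A.emb B.emb
  | _, .impl A B => .impl A.emb B.emb
  | _, .delta A => .delta A.emb
  | _, .all A => .all A.emb
  | _, .ex A => .ex A.emb

/-- Prefix of `n` existential quantifiers (outermost quantifier binds variable 0). -/
def Form.exN {L : Lang} : ∀ n, Form L n → Form L 0
  | 0, A => A
  | n+1, A => Form.exN n (Form.ex A)

/-- Prefix of `n` universal quantifiers (outermost quantifier binds variable 0). -/
def Form.allN {L : Lang} : ∀ n, Form L n → Form L 0
  | 0, A => A
  | n+1, A => Form.allN n (Form.all A)

/-!
Take atoms `P(n)` with values `aₙ ∈ V` that are positive but have infimum 0: then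
`F = ¬∀x P(x) ∧ ∀x ¬¬P(x)` is true. Now push every positive atom value up to 1. Since `¬¬`
commutes with `∧`, `∨`, `⊃`, and the quantifier steps can only gain, a prenex Δ-free sentence
that was positive stays positive; but `F` becomes false, because `∀x P(x)` is now true. Validity
of `¬¬(F ↔ Q)` says exactly that `F` and `Q` are positive together, so no prenex `Q` works.
-/

section

variable {L : Lang} {V : Set ℝ}

/-- The truth function of `¬¬` in Gödel logic. -/
noncomputable def dneg (x : ℝ) : ℝ := if 0 < x then 1 else 0

lemma dneg_monotone : Monotone dneg := by
  intro x y hxy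
  unfold dneg
  split_ifs <;> linarith

lemma dneg_eq_one_iff {x : ℝ} : dneg x = 1 ↔ 0 < x := by
  unfold dneg; split_ifs with hx <;> simp [hx]

lemma dneg_impl {a b : ℝ} (hb : 0 ≤ b) :
    dneg (if a ≤ b then 1 else b) = if dneg a ≤ dneg b then 1 else dneg b := by
  by_cases hab : a ≤ b
  · rw [if_pos hab, if_pos (dneg_monotone hab), dneg_eq_one_iff.2 one_pos]
  · have ha : dneg a = 1 := dneg_eq_one_iff.2 (hb.trans_lt (not_le.1 hab))
    rw [if_neg hab, ha]
    by_cases hb' : 0 < b <;> simp [dneg, hb']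

lemma pos_of_impl_pos {a b : ℝ} (h : 0 < if a ≤ b then 1 else b) (ha : 0 < a) : 0 < b := by
  split_ifs at h with hab
  exacts [ha.trans_le hab, h]

lemma val_not (K : Interp L V) {n} (A : Form L n) (ρ : Fin n → K.Dom) :
    Form.val K A.not ρ = if Form.val K A ρ ≤ 0 then 1 else 0 := rfl

lemma val_not_not (K : Interp L V) {n} (A : Form L n) (ρ : Fin n → K.Dom) :
    Form.val K A.not.not ρ = dneg (Form.val K A ρ) := by
  simp only [val_not, dneg]
  rcases le_or_gt (Form.val K A ρ) 0 with h | h <;> simp [h, not_lt.2, not_le.2]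

lemma val_all (K : Interp L V) {n} (A : Form L (n+1)) (ρ : Fin n → K.Dom) :
    Form.val K (Form.all A) ρ = ⨅ d, Form.val K A (Fin.snoc ρ d) := by
  simp only [Form.val, iInf, Set.range, eq_comm]

lemma val_ex (K : Interp L V) {n} (A : Form L (n+1)) (ρ : Fin n → K.Dom) :
    Form.val K (Form.ex A) ρ = ⨆ d, Form.val K A (Fin.snoc ρ d) := by
  simp only [Form.val, iSup, Set.range, eq_comm]

lemma val_mem_Icc (hV : V ⊆ Set.Icc 0 1) (K : Interp L V) {n} (B : Form L n)
    (ρ : Fin n → K.Dom) : Form.val K B ρ ∈ Set.Icc (0:ℝ) 1 := by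
  have := K.dom_nonempty
  induction B with
  | falsum => exact ⟨le_rfl, zero_le_one⟩
  | atom R ts => exact hV (K.relVal_mem R _)
  | conj A B ihA ihB => exact ⟨le_min (ihA ρ).1 (ihB ρ).1, min_le_of_left_le (ihA ρ).2⟩
  | disj A B ihA ihB => exact ⟨le_max_of_le_left (ihA ρ).1, max_le (ihA ρ).2 (ihB ρ).2⟩
  | impl A B ihA ihB =>
      simp only [Form.val]
      split
      exacts [⟨zero_le_one, le_rfl⟩, ihB ρ]
  | delta A ihA =>
      simp only [Form.val]
      split
      exacts [⟨zero_le_one, le_rfl⟩, ⟨le_rfl, zero_le_one⟩]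
  | all A ihA =>
      rw [val_all]
      obtain ⟨d⟩ := K.dom_nonempty
      exact ⟨le_ciInf fun e => (ihA _).1,
        (ciInf_le ⟨0, Set.forall_mem_range.2 fun e => (ihA _).1⟩ d).trans (ihA _).2⟩
  | ex A ihA =>
      rw [val_ex]
      obtain ⟨d⟩ := K.dom_nonempty
      exact ⟨(ihA _).1.trans (le_ciSup ⟨1, Set.forall_mem_range.2 fun e => (ihA _).2⟩ d),
        ciSup_le fun e => (ihA _).2⟩

noncomputable def Interp.collapse (I : Interp L V) (h0 : (0:ℝ) ∈ V) (h1 : (1:ℝ) ∈ V) :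
    Interp L V where
  Dom := I.Dom
  dom_nonempty := I.dom_nonempty
  funMap := I.funMap
  relVal R v := dneg (I.relVal R v)
  relVal_mem R v := by unfold dneg; split <;> assumption

section Collapse

variable (I : Interp L V) (h0 : (0:ℝ) ∈ V) (h1 : (1:ℝ) ∈ V)

lemma Interp.eval_collapse {α : Type} (v : α → I.Dom) (t : Term L α) :
    Term.eval (I.collapse h0 h1) v t = Term.eval I v t := by
  induction t with
  | var i => rfl
  | func f ts ih => exact congrArg (I.funMap f) (funext ih)

lemma Interp.val_collapse_of_quantFree (hV : V ⊆ Set.Icc 0 1) {n} (B : Form L n)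
    (hq : QuantFree B) (hd : DeltaFree B) (ρ : Fin n → I.Dom) :
    Form.val (I.collapse h0 h1) B ρ = dneg (Form.val I B ρ) := by
  induction B with
  | falsum => simp [Form.val, dneg]
  | atom R ts => simp only [Form.val, I.eval_collapse]; rfl
  | conj A B ihA ihB =>
      exact (congrArg₂ min (ihA hq.1 hd.1 ρ) (ihB hq.2 hd.2 ρ)).trans
        (dneg_monotone.map_min).symm
  | disj A B ihA ihB =>
      exact (congrArg₂ max (ihA hq.1 hd.1 ρ) (ihB hq.2 hd.2 ρ)).trans
        (dneg_monotone.map_max).symm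
  | impl A B ihA ihB =>
      simp only [Form.val]
      rw [ihA hq.1 hd.1 ρ, ihB hq.2 hd.2 ρ, dneg_impl (val_mem_Icc hV I B ρ).1]
  | delta A => exact hd.elim
  | all A => exact hq.elim
  | ex A => exact hq.elim

lemma Interp.dneg_val_le_val_collapse (hV : V ⊆ Set.Icc 0 1) {n} {B : Form L n}
    (hB : IsPrenex B) (hd : DeltaFree B) (ρ : Fin n → I.Dom) :
    dneg (Form.val I B ρ) ≤ Form.val (I.collapse h0 h1) B ρ := by
  have := I.dom_nonempty
  have := (I.collapse h0 h1).dom_nonempty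
  induction hB with
  | qf hq => exact (I.val_collapse_of_quantFree h0 h1 hV _ hq hd ρ).ge
  | @all m A _ ih =>
      rw [val_all, val_all (I.collapse h0 h1) A ρ]
      refine le_ciInf fun d => (dneg_monotone ?_).trans (ih hd _)
      exact ciInf_le ⟨0, Set.forall_mem_range.2 fun e => (val_mem_Icc hV I _ _).1⟩ d
  | @ex m A _ ih =>
      rw [val_ex, val_ex (I.collapse h0 h1) A ρ]
      by_cases hpos : 0 < ⨆ d, Form.val I A (Fin.snoc ρ d)
      · obtain ⟨d, hd'⟩ := exists_lt_of_lt_ciSup hpos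
        calc dneg (⨆ d, Form.val I A (Fin.snoc ρ d))
            = dneg (Form.val I A (Fin.snoc ρ d)) := by simp only [dneg, hpos, hd']
          _ ≤ Form.val (I.collapse h0 h1) A (Fin.snoc ρ d) := ih hd _
          _ ≤ _ := le_ciSup ⟨1, Set.forall_mem_range.2
                fun e => (val_mem_Icc hV (I.collapse h0 h1) _ _).2⟩ d
      · rw [dneg, if_neg hpos]
        exact Real.iSup_nonneg fun e => (val_mem_Icc hV _ _ _).1

end Collapse

lemma pos_iff_pos_of_sval_not_not_iff {K : Interp L V} {A B : Form L 0}
    (h : Form.sval K (A.iff B).not.not = 1) : 0 < Form.sval K A ↔ 0 < Form.sval K B := by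
  rw [Form.sval, val_not_not, dneg_eq_one_iff] at h
  obtain ⟨hAB, hBA⟩ := lt_min_iff.1 h
  exact ⟨pos_of_impl_pos hAB, pos_of_impl_pos hBA⟩

lemma exists_seq_pos_iInf_eq_zero (h0 : ∀ ε > (0:ℝ), (V ∩ Set.Ioo 0 ε).Nonempty) :
    ∃ a : ℕ → ℝ, (∀ n, a n ∈ V) ∧ (∀ n, 0 < a n) ∧ ⨅ n, a n = 0 := by
  choose a ha using fun n : ℕ => h0 (1 / (n + 1)) Nat.one_div_pos_of_nat
  refine ⟨a, fun n => (ha n).1, fun n => (ha n).2.1, le_antisymm ?_ ?_⟩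
  · refine le_of_forall_pos_lt_add fun ε hε => ?_
    obtain ⟨n, hn⟩ := exists_nat_one_div_lt hε
    calc ⨅ n, a n ≤ a n := ciInf_le ⟨0, Set.forall_mem_range.2 fun n => (ha n).2.1.le⟩ n
      _ < 0 + ε := by linarith [(ha n).2.2]
  · exact Real.iInf_nonneg fun n => (ha n).2.1.le

/-- Only the values `P(n) = a n` matter; the sum just gives every other atom a value in `V`. -/
def Interp.ofSeq (a : ℕ → ℝ) (ha : ∀ n, a n ∈ V) : Interp L V where
  Dom := ℕ
  dom_nonempty := ⟨0⟩
  funMap _ _ := 0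
  relVal _ v := a (∑ i, v i)
  relVal_mem _ _ := ha _

abbrev notAllAndAllNotNot (P : L.Rel 1) : Form L 0 :=
  Form.conj (Form.not (Form.all (atom1 P (Term.var 0))))
    (Form.all (Form.not (Form.not (atom1 P (Term.var 0)))))

lemma sval_notAllAndAllNotNot (K : Interp L V) (P : L.Rel 1) :
    Form.sval K (notAllAndAllNotNot P) =
    min (if ⨅ d, K.relVal P (fun _ => d) ≤ 0 then 1 else 0)
      (⨅ d, dneg (K.relVal P (fun _ => d))) := by
  have hP : ∀ d, Form.val K (atom1 P (Term.var 0)) (Fin.snoc Fin.elim0 d) =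
      K.relVal P (fun _ => d) := fun d => rfl
  simp only [Form.sval, Form.val.eq_3, val_all, val_not_not]
  simp only [val_not, val_all, hP]

section Sequence

variable (P : L.Rel 1) {a : ℕ → ℝ} (ha : ∀ n, a n ∈ V) (ha_pos : ∀ n, 0 < a n)
include ha_pos

lemma sval_ofSeq_notAllAndAllNotNot (ha_inf : ⨅ n, a n = 0) :
    Form.sval (Interp.ofSeq a ha) (notAllAndAllNotNot P) = 1 := by
  rw [sval_notAllAndAllNotNot]
  show min (if ⨅ d : ℕ, a (∑ _ : Fin 1, d) ≤ 0 then 1 else 0) (⨅ d : ℕ, dneg (a (∑ _ : Fin 1, d)))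
    = 1
  simp only [Fin.sum_univ_one, ha_inf, le_rfl, if_true, dneg_eq_one_iff.2 (ha_pos _),
    ciInf_const, min_self]

lemma sval_collapse_ofSeq_notAllAndAllNotNot (h0 : (0:ℝ) ∈ V) (h1 : (1:ℝ) ∈ V) :
    Form.sval ((Interp.ofSeq a ha).collapse h0 h1) (notAllAndAllNotNot P) = 0 := by
  rw [sval_notAllAndAllNotNot]
  show min (if ⨅ d : ℕ, dneg (a (∑ _ : Fin 1, d)) ≤ 0 then 1 else 0)
    (⨅ d : ℕ, dneg (dneg (a (∑ _ : Fin 1, d)))) = 0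
  simp only [Fin.sum_univ_one, dneg_eq_one_iff.2 (ha_pos _), dneg_eq_one_iff.2 one_pos,
    ciInf_const]
  norm_num

end Sequence

end

/-- If 0 is not isolated in the Gödel set `V` and `L` contains a
unary predicate `P`, then `F = ¬∀x P(x) ∧ ∀x ¬¬P(x)` admits no >0-valid
equivalent prenex form: there is no prenex sentence `Q` such that `¬¬(F ↔ Q)`
is valid in `G_V`. -/
theorem stmt_7 {L : Lang} {V : Set ℝ} (hV : GodelSet V)
    (h0 : ∀ ε > (0:ℝ), (V ∩ Set.Ioo 0 ε).Nonempty) (P : L.Rel 1) :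
    ¬ ∃ Q : Form L 0, IsPrenex Q ∧ DeltaFree Q ∧
        Valid V (Form.not (Form.not (Form.iff
          (Form.conj (Form.not (Form.all (atom1 P (Term.var 0))))
            (Form.all (Form.not (Form.not (atom1 P (Term.var 0))))))
          Q))) := by
  rintro ⟨Q, hQ, hQΔ, hvalid⟩
  obtain ⟨-, hV, hV0, hV1⟩ := hV
  obtain ⟨a, ha, ha_pos, ha_inf⟩ := exists_seq_pos_iInf_eq_zero h0
  set I : Interp L V := Interp.ofSeq a ha
  have hIQ : 0 < Form.sval I Q := (pos_iff_pos_of_sval_not_not_iff (hvalid I)).1 <| by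
    rw [sval_ofSeq_notAllAndAllNotNot P ha ha_pos ha_inf]
    exact one_pos
  have hJQ : 0 < Form.sval (I.collapse hV0 hV1) Q := one_pos.trans_le <|
    (dneg_eq_one_iff.2 hIQ).symm.trans_le (I.dneg_val_le_val_collapse hV0 hV1 hV hQ hQΔ _)
  have hJF := (pos_iff_pos_of_sval_not_not_iff (hvalid (I.collapse hV0 hV1))).2 hJQ
  rw [sval_collapse_ofSeq_notAllAndAllNotNot P ha ha_pos] at hJF
  exact lt_irrefl 0 hJF

end GodelPaper
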